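/- arXiv:2201.05498 — 2 statements merged into one kernel-verified Lean document; each statement's English description precedes it below -/
import Mathlib

section
/- For every k ∈ ℕ, every finite set J ⊆ {k−τ, …, k−1} ∩ ℕ such that x^k = x̂^k + Σ_{h∈J} (x^{h+1} − x^h), and every x ∈ H, one has ⟨∇f(x̂^k), x − x^k⟩ ≤ f(x) − f(x^k) + (τ L_res / 2) · Σ_{h∈J} ‖x^h − x^{h+1}‖². -/
/-!
Write `x^k = x̂^k + v` with `v = ∑_{h ∈ J} Δ_h`, where `Δ_h = x^{h+1} - x^h` changes only the
coordinate `i_h`. The segment from `x̂^k` to `x̂^k + t v` is a chain of single-coordinate moves,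
so the coordinatewise Lipschitz bound gives `‖∇f(x̂^k + t v) - ∇f(x̂^k)‖ ≤ t L_res S` with
`S = ∑ ‖Δ_h‖`, whence the descent inequality `f(x^k) ≤ f(x̂^k) + ⟪∇f(x̂^k), v⟫ + L_res S² / 2`.
Adding the gradient inequality of convexity at `x̂^k` and using
`S² ≤ |J| ∑ ‖Δ_h‖² ≤ τ ∑ ‖Δ_h‖²` gives the claim.
-/

open MeasureTheory ProbabilityTheory Filter Topology Set
open scoped BigOperators RealInnerProductSpace ENNReal

noncomputable section

set_option synthInstance.maxHeartbeats 400000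
set_option maxHeartbeats 1000000

variable {m : ℕ} {H : Fin m → Type*}
  [∀ i, NormedAddCommGroup (H i)] [∀ i, InnerProductSpace ℝ (H i)]

/-- The Hilbert direct sum `H = H₁ ⊕ ⋯ ⊕ H_m` is complete when each factor is. -/
instance [∀ i, CompleteSpace (H i)] : CompleteSpace (PiLp 2 H) :=
  inferInstance

/-- Weighted squared norm `∑ i, w i * ‖u i‖²` on the direct sum. -/
def wnormSq (w : Fin m → ℝ) (u : PiLp 2 H) : ℝ := ∑ i, w i * ‖u i‖ ^ 2

/-- Weighted inner product `∑ i, w i * ⟪u i, v i⟫` on the direct sum. -/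
def winner (w : Fin m → ℝ) (u v : PiLp 2 H) : ℝ := ∑ i, w i * ⟪u i, v i⟫

/-- `upd x i u` replaces the `i`-th coordinate of `x` by `u`. -/
def upd (x : PiLp 2 H) (i : Fin m) (u : H i) : PiLp 2 H := WithLp.toLp 2 (Function.update x i u)

/-- `IsProx c gi v pt` asserts that `pt` is the unique minimizer of
`u ↦ gi u + (1/(2c))‖u − v‖²`, i.e. `pt = prox_{c·gi}(v)`. -/
def IsProx {E : Type*} [NormedAddCommGroup E] (c : ℝ) (gi : E → ℝ) (v pt : E) : Prop :=
  (∀ u : E, gi pt + 1 / (2 * c) * ‖pt - v‖ ^ 2 ≤ gi u + 1 / (2 * c) * ‖u - v‖ ^ 2) ∧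
  (∀ u : E, gi u + 1 / (2 * c) * ‖u - v‖ ^ 2 ≤ gi pt + 1 / (2 * c) * ‖pt - v‖ ^ 2 → u = pt)

/-- The objective `F = f + g`, where `g x = ∑ i, g i (x i)`. -/
def Fobj (f : PiLp 2 H → ℝ) (g : ∀ i, H i → ℝ) (z : PiLp 2 H) : ℝ := f z + ∑ i, g i (z i)

/-- Delayed iterate `x̂^k`, coordinate `j` reads `x^{k - d^k_j}` (deterministic trajectory,
indices in `ℤ`, with `x^n = x^0` for `n ≤ 0`). -/
def xhatD (x : ℤ → PiLp 2 H) (d : ℕ → Fin m → ℕ) (k : ℕ) : PiLp 2 H :=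
  WithLp.toLp 2 (fun j => x ((k : ℤ) - d k j) j)

/-- Delayed iterate `x̂^k` (random trajectory). -/
def xhatP {Ω : Type*} (x : ℤ → Ω → PiLp 2 H) (d : ℕ → Fin m → ℕ) (k : ℕ) (ω : Ω) :
    PiLp 2 H :=
  WithLp.toLp 2 (fun j => x ((k : ℤ) - d k j) ω j)

/-- `alphaT c τ x k = c * ∑_{h=k-τ}^{k-1} (h-(k-τ)+1) ‖x^{h+1} - x^h‖²`. -/
def alphaT (c : ℝ) (τ : ℕ) (x : ℤ → PiLp 2 H) (k : ℕ) : ℝ :=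
  c * ∑ j ∈ Finset.range τ,
    ((j : ℝ) + 1) * ‖x ((k : ℤ) - τ + j + 1) - x ((k : ℤ) - τ + j)‖ ^ 2

/-- `alphaV p c τ x k ω = c * ∑_{h=k-τ}^{k-1} (h-(k-τ)+1) ‖x^{h+1} - x^h‖²_V`. -/
def alphaV {Ω : Type*} (p : Fin m → ℝ) (c : ℝ) (τ : ℕ) (x : ℤ → Ω → PiLp 2 H)
    (k : ℕ) (ω : Ω) : ℝ :=
  c * ∑ j ∈ Finset.range τ,
    ((j : ℝ) + 1) * wnormSq p (x ((k : ℤ) - τ + j + 1) ω - x ((k : ℤ) - τ + j) ω)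

/-- The constant `L_res^V/(2√p_max)` appearing in `α_k`, where `L_res^V = L_res √(p_max/p_min)`. -/
def alphaConst (Lres pmax pmin : ℝ) : ℝ :=
  Lres * Real.sqrt (pmax / pmin) / (2 * Real.sqrt pmax)

/-- The σ-algebra generated by `i_0, …, i_{k-1}`. -/
def pastFiltration {Ω : Type*} [MeasurableSpace Ω] (idx : ℕ → Ω → Fin m) (k : ℕ) :
    MeasurableSpace Ω :=
  ⨆ j ∈ Finset.range k, MeasurableSpace.comap (idx j) ⊤

/-- The random index set `J(k) = {h ∈ {k-τ,…,k-1} : d^k_{i_h} ≥ k-h}`. -/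
def Jset {Ω : Type*} (idx : ℕ → Ω → Fin m) (d : ℕ → Fin m → ℕ) (τ k : ℕ) (ω : Ω) :
    Finset ℕ :=
  (Finset.Ico (k - τ) k).filter fun h => k - h ≤ d k (idx h ω)

section Smooth

variable {E : Type*} [NormedAddCommGroup E] [InnerProductSpace ℝ E] [CompleteSpace E]
  {f : E → ℝ} {f' : E → E}

lemma hasDerivAt_comp_add_smul (hf : ∀ z, HasGradientAt f (f' z) z) (a v : E) (t : ℝ) :
    HasDerivAt (fun s : ℝ => f (a + s • v)) ⟪f' (a + t • v), v⟫ t := by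
  have hline : HasDerivAt (fun s : ℝ => a + s • v) v t := by
    simpa using ((hasDerivAt_id t).smul_const v).const_add a
  have h := (hf (a + t • v)).hasFDerivAt.comp_hasDerivAt t hline
  rw [InnerProductSpace.toDual_apply_apply] at h
  exact h

lemma ConvexOn.add_inner_gradient_le (hconv : ConvexOn ℝ univ f)
    (hf : ∀ z, HasGradientAt f (f' z) z) (a b : E) :
    f a + ⟪f' a, b - a⟫ ≤ f b := by
  have hline : ConvexOn ℝ univ fun t : ℝ => f (a + t • (b - a)) := by
    simpa [Function.comp_def, AffineMap.lineMap_apply_module', add_comm] using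
      hconv.comp_affineMap (AffineMap.lineMap a b)
  have hslope := hline.le_slope_of_hasDerivAt (mem_univ 0) (mem_univ 1) zero_lt_one
    (by simpa using hasDerivAt_comp_add_smul hf a (b - a) 0)
  simp [slope_def_field] at hslope
  linarith

lemma le_add_inner_add_of_norm_gradient_sub_le (hf : ∀ z, HasGradientAt f (f' z) z)
    (y v : E) (K : ℝ) (hK : ∀ t ∈ Ico (0 : ℝ) 1, ‖f' (y + t • v) - f' y‖ ≤ t * K) :
    f (y + v) ≤ f y + ⟪f' y, v⟫ + K * ‖v‖ / 2 := by
  have hderiv := hasDerivAt_comp_add_smul hf y v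
  have hbound := image_le_of_deriv_right_le_deriv_boundary (a := 0) (b := 1)
    (f := fun t : ℝ => f (y + t • v))
    (B := fun t => f y + t * ⟪f' y, v⟫ + t ^ 2 * (K * ‖v‖) / 2)
    (B' := fun t => ⟪f' y, v⟫ + t * (K * ‖v‖))
    (fun t _ => (hderiv t).continuousAt.continuousWithinAt)
    (fun t _ => (hderiv t).hasDerivWithinAt) (by simp)
    (by fun_prop)
    (fun t _ => by
      have h : HasDerivAt (fun t => f y + t * ⟪f' y, v⟫ + t ^ 2 * (K * ‖v‖) / 2)
          (1 * ⟪f' y, v⟫ + ↑2 * t ^ (2 - 1) * (K * ‖v‖) / 2) t :=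
        (((hasDerivAt_id t).mul_const ⟪f' y, v⟫).const_add (f y)).add
          (((hasDerivAt_pow 2 t).mul_const (K * ‖v‖)).div_const 2)
      exact (h.congr_deriv (by ring)).hasDerivWithinAt)
    (fun t ht => by
      have hinner : ⟪f' (y + t • v) - f' y, v⟫ ≤ t * K * ‖v‖ :=
        (real_inner_le_norm _ _).trans (by gcongr; exact hK t ht)
      rw [inner_sub_left] at hinner
      linarith)
    (right_mem_Icc.2 zero_le_one)
  simpa using hbound

end Smooth

section Coordinatewise

variable {G : Fin m → Type*} [∀ i, NormedAddCommGroup (G i)]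

def IsSingleCoord (Δ : PiLp 2 G) : Prop := ∃ i, ∀ j, j ≠ i → Δ j = 0

lemma IsSingleCoord.smul [∀ i, NormedSpace ℝ (G i)] {Δ : PiLp 2 G} (hΔ : IsSingleCoord Δ)
    (c : ℝ) : IsSingleCoord (c • Δ) := by
  obtain ⟨i, hi⟩ := hΔ
  exact ⟨i, fun j hj => by simp [hi j hj]⟩

lemma norm_map_add_sub_map_le_of_isSingleCoord {f' : PiLp 2 G → PiLp 2 G} {L : ℝ} (hL : 0 ≤ L)
    (hf' : ∀ (z : PiLp 2 G) (i : Fin m) (u u' : G i),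
      ‖f' (upd z i u) - f' (upd z i u')‖ ≤ L * ‖u - u'‖)
    (z : PiLp 2 G) {Δ : PiLp 2 G} (hΔ : IsSingleCoord Δ) :
    ‖f' (z + Δ) - f' z‖ ≤ L * ‖Δ‖ := by
  obtain ⟨i, hi⟩ := hΔ
  have hupd : ∀ w : PiLp 2 G, (∀ j, j ≠ i → w j = 0) → z + w = upd z i (z i + w i) := by
    intro w hw
    ext j
    by_cases hj : j = i
    · subst hj; simp [upd]
    · simp [upd, Function.update_of_ne hj, hw j hj]
  calc ‖f' (z + Δ) - f' z‖
      = ‖f' (upd z i (z i + Δ i)) - f' (upd z i (z i + (0 : PiLp 2 G) i))‖ := by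
        rw [← hupd Δ hi, ← hupd 0 fun _ _ => rfl, add_zero]
    _ ≤ L * ‖Δ i‖ := by simpa using hf' z i (z i + Δ i) (z i)
    _ ≤ L * ‖Δ‖ := by gcongr; exact PiLp.norm_apply_le Δ i

lemma norm_map_add_sum_sub_map_le {ι : Type*} {f' : PiLp 2 G → PiLp 2 G} {L : ℝ}
    (hL : 0 ≤ L)
    (hf' : ∀ (z : PiLp 2 G) (i : Fin m) (u u' : G i),
      ‖f' (upd z i u) - f' (upd z i u')‖ ≤ L * ‖u - u'‖)
    (y : PiLp 2 G) (Δ : ι → PiLp 2 G) (s : Finset ι) (hΔ : ∀ h ∈ s, IsSingleCoord (Δ h)) :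
    ‖f' (y + ∑ h ∈ s, Δ h) - f' y‖ ≤ L * ∑ h ∈ s, ‖Δ h‖ := by
  classical
  induction s using Finset.induction_on with
  | empty => simp
  | @insert a s ha ih =>
    rw [Finset.sum_insert ha, Finset.sum_insert ha, add_left_comm, mul_add]
    calc ‖f' (Δ a + (y + ∑ h ∈ s, Δ h)) - f' y‖
        ≤ ‖f' ((y + ∑ h ∈ s, Δ h) + Δ a) - f' (y + ∑ h ∈ s, Δ h)‖ +
            ‖f' (y + ∑ h ∈ s, Δ h) - f' y‖ := by
          rw [add_comm (Δ a)]; exact norm_sub_le_norm_sub_add_norm_sub _ _ _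
      _ ≤ L * ‖Δ a‖ + L * ∑ h ∈ s, ‖Δ h‖ :=
          add_le_add
            (norm_map_add_sub_map_le_of_isSingleCoord hL hf' _ (hΔ a (Finset.mem_insert_self a s)))
            (ih fun h hh => hΔ h (Finset.mem_insert_of_mem hh))

lemma le_add_inner_add_of_sum_isSingleCoord [∀ i, CompleteSpace (H i)] {ι : Type*}
    {f : PiLp 2 H → ℝ} {f' : PiLp 2 H → PiLp 2 H} (hf : ∀ z, HasGradientAt f (f' z) z)
    {L : ℝ} (hL : 0 ≤ L)
    (hf' : ∀ (z : PiLp 2 H) (i : Fin m) (u u' : H i),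
      ‖f' (upd z i u) - f' (upd z i u')‖ ≤ L * ‖u - u'‖)
    (y : PiLp 2 H) (Δ : ι → PiLp 2 H) (s : Finset ι) (hΔ : ∀ h ∈ s, IsSingleCoord (Δ h)) :
    f (y + ∑ h ∈ s, Δ h) ≤ f y + ⟪f' y, ∑ h ∈ s, Δ h⟫ + L / 2 * (∑ h ∈ s, ‖Δ h‖) ^ 2 := by
  have hdrift : ∀ t ∈ Ico (0 : ℝ) 1,
      ‖f' (y + t • ∑ h ∈ s, Δ h) - f' y‖ ≤ t * (L * ∑ h ∈ s, ‖Δ h‖) := by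
    intro t ht
    have := norm_map_add_sum_sub_map_le hL hf' y (fun h => t • Δ h) s
      fun h hh => (hΔ h hh).smul t
    simp only [norm_smul, Real.norm_eq_abs, abs_of_nonneg ht.1, ← Finset.mul_sum,
      ← Finset.smul_sum] at this
    linarith
  have hdesc := le_add_inner_add_of_norm_gradient_sub_le hf y _ _ hdrift
  have hnorm : ‖∑ h ∈ s, Δ h‖ ≤ ∑ h ∈ s, ‖Δ h‖ := norm_sum_le _ _
  have hS : 0 ≤ ∑ h ∈ s, ‖Δ h‖ := Finset.sum_nonneg fun _ _ => norm_nonneg _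
  nlinarith [mul_le_mul_of_nonneg_left hnorm (mul_nonneg hL hS)]

end Coordinatewise

theorem stmt2_general
    [∀ i, CompleteSpace (H i)]
    (τ : ℕ) (d : ℕ → Fin m → ℕ)
    (idx : ℕ → Fin m)
    (x : ℤ → PiLp 2 H)
    (hx_agree : ∀ (k : ℕ) (j : Fin m), j ≠ idx k → x ((k : ℤ) + 1) j = x (k : ℤ) j)
    (f : PiLp 2 H → ℝ) (f' : PiLp 2 H → PiLp 2 H)
    (hf_grad : ∀ z : PiLp 2 H, HasGradientAt f (f' z) z)
    (Lres : ℝ) (hLres_pos : 0 < Lres)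
    (hf_lip_res : ∀ (z : PiLp 2 H) (i : Fin m) (u u' : H i),
      ‖f' (upd z i u) - f' (upd z i u')‖ ≤ Lres * ‖u - u'‖)
    (hf_convex : ConvexOn ℝ Set.univ f) :
    ∀ (k : ℕ) (J : Finset ℕ), J ⊆ Finset.Ico (k - τ) k →
      x (k : ℤ) = xhatD x d k + ∑ h ∈ J, (x ((h : ℤ) + 1) - x (h : ℤ)) →
      ∀ z : PiLp 2 H,
        ⟪f' (xhatD x d k), z - x (k : ℤ)⟫ ≤
          f z - f (x (k : ℤ)) +
            τ * Lres / 2 * ∑ h ∈ J, ‖x (h : ℤ) - x ((h : ℤ) + 1)‖ ^ 2 := by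
  intro k J hJ hxk z
  set y := xhatD x d k
  set Δ : ℕ → PiLp 2 H := fun h => x ((h : ℤ) + 1) - x (h : ℤ)
  have hmoves : ∀ h ∈ J, IsSingleCoord (Δ h) :=
    fun h _ => ⟨idx h, fun j hj => by simp [Δ, hx_agree h j hj]⟩
  have hdesc :=
    le_add_inner_add_of_sum_isSingleCoord hf_grad hLres_pos.le hf_lip_res y Δ J hmoves
  have hconv := hf_convex.add_inner_gradient_le hf_grad y z
  have hcard : (J.card : ℝ) ≤ τ := by
    have := Finset.card_le_card hJ
    rw [Nat.card_Ico] at this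
    exact_mod_cast this.trans (by omega)
  have hCS : (∑ h ∈ J, ‖Δ h‖) ^ 2 ≤ τ * ∑ h ∈ J, ‖Δ h‖ ^ 2 :=
    sq_sum_le_card_mul_sum_sq.trans (by gcongr)
  rw [← hxk] at hdesc
  have hinner : ⟪f' y, z - x k⟫ = ⟪f' y, z - y⟫ - ⟪f' y, ∑ h ∈ J, Δ h⟫ := by
    rw [← inner_sub_right, hxk]; congr 1; abel
  simp_rw [norm_sub_rev (x (_ : ℕ)) (x ((_ : ℕ) + 1))]
  nlinarith [mul_le_mul_of_nonneg_left hCS (half_pos hLres_pos).le]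

/-- For every `k`, every finite `J ⊆ {k-τ,…,k-1} ∩ ℕ` with
`x^k = x̂^k + ∑_{h∈J} (x^{h+1} - x^h)`, and every `z ∈ H`,
`⟪∇f(x̂^k), z - x^k⟫ ≤ f z - f (x^k) + (τ L_res / 2) ∑_{h∈J} ‖x^h - x^{h+1}‖²`. -/
theorem stmt2
    [∀ i, CompleteSpace (H i)]
    (hm : 0 < m)
    (τ : ℕ) (d : ℕ → Fin m → ℕ) (hd : ∀ (k : ℕ) (j : Fin m), d k j ≤ min k τ)
    (idx : ℕ → Fin m)
    (x : ℤ → PiLp 2 H) (x0 : PiLp 2 H)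
    (hx_init : ∀ n : ℤ, n ≤ 0 → x n = x0)
    (hx_agree : ∀ (k : ℕ) (j : Fin m), j ≠ idx k → x ((k : ℤ) + 1) j = x (k : ℤ) j)
    (f : PiLp 2 H → ℝ) (f' : PiLp 2 H → PiLp 2 H)
    (hf_grad : ∀ z : PiLp 2 H, HasGradientAt f (f' z) z)
    (Lres : ℝ) (hLres_pos : 0 < Lres)
    (hf_lip_res : ∀ (z : PiLp 2 H) (i : Fin m) (u u' : H i),
      ‖f' (upd z i u) - f' (upd z i u')‖ ≤ Lres * ‖u - u'‖)
    (hf_convex : ConvexOn ℝ Set.univ f) :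
    ∀ (k : ℕ) (J : Finset ℕ), J ⊆ Finset.Ico (k - τ) k →
      x (k : ℤ) = xhatD x d k + ∑ h ∈ J, (x ((h : ℤ) + 1) - x (h : ℤ)) →
      ∀ z : PiLp 2 H,
        ⟪f' (xhatD x d k), z - x (k : ℤ)⟫ ≤
          f z - f (x (k : ℤ)) +
            τ * Lres / 2 * ∑ h ∈ J, ‖x (h : ℤ) - x ((h : ℤ) + 1)‖ ^ 2 :=
  stmt2_general τ d idx x hx_agree f f' hf_grad Lres hLres_pos hf_lip_res hf_convex
end
end

section
/- For every k ∈ ℕ: ⟨∇f(x^k) − ∇f(x̂^k), x^{k+1} − x^k⟩ ≤ τ L_res · ‖x^{k+1} − x^k‖² + α̃_k − α̃_{k+1}, where α̃_k = (L_res/2) · Σ_{h=k−τ}^{k−1} (h − (k−τ) + 1) · ‖x^{h+1} − x^h‖². -/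
open MeasureTheory ProbabilityTheory Filter Topology Set
open scoped BigOperators RealInnerProductSpace ENNReal

noncomputable section

set_option synthInstance.maxHeartbeats 400000
set_option maxHeartbeats 1000000

variable {m : ℕ} {H : Fin m → Type*}
  [∀ i, NormedAddCommGroup (H i)] [∀ i, InnerProductSpace ℝ (H i)]

/-! Write `y^h` for the point whose `j`-th coordinate is read at time `max (s j) h`, where
`s j = k - d^k_j`. Then `y^{k-τ} = x̂^k` and `y^k = x^k`, and `y^{h+1}` differs from `y^h` at most
in coordinate `i_h`, by at most `‖x^{h+1} - x^h‖`. Coordinatewise Lipschitzness of `∇f` along this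
path gives `‖∇f(x^k) - ∇f(x̂^k)‖ ≤ L_res ∑_{h=k-τ}^{k-1} ‖x^{h+1} - x^h‖`; Cauchy–Schwarz, AM–GM
on each term, and summation by parts in `α̃_k - α̃_{k+1}` finish the proof. -/

def readIter (x : ℤ → PiLp 2 H) (s : Fin m → ℤ) : PiLp 2 H :=
  WithLp.toLp 2 fun j => x (s j) j

lemma Finset.sum_range_succ_mul_sub_shift (a : ℕ → ℝ) (n : ℕ) :
    ∑ j ∈ Finset.range n, ((j : ℝ) + 1) * a j - ∑ j ∈ Finset.range n, ((j : ℝ) + 1) * a (j + 1)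
      = ∑ j ∈ Finset.range n, a j - n * a n := by
  induction n with
  | zero => simp
  | succ n ih =>
    simp only [Finset.sum_range_succ]
    push_cast
    linarith

omit [∀ i, InnerProductSpace ℝ (H i)] in
lemma alphaT_sub_alphaT_succ (c : ℝ) (τ : ℕ) (x : ℤ → PiLp 2 H) (k : ℕ) :
    alphaT c τ x k - alphaT c τ x (k + 1)
      = c * ∑ j ∈ Finset.range τ, ‖x ((k : ℤ) - τ + j + 1) - x ((k : ℤ) - τ + j)‖ ^ 2
        - c * τ * ‖x ((k : ℤ) + 1) - x k‖ ^ 2 := by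
  set a : ℕ → ℝ := fun j => ‖x ((k : ℤ) - τ + j + 1) - x ((k : ℤ) - τ + j)‖ ^ 2
  have hshift : alphaT c τ x (k + 1) = c * ∑ j ∈ Finset.range τ, ((j : ℝ) + 1) * a (j + 1) := by
    simp only [alphaT, a]
    congr 1
    refine Finset.sum_congr rfl fun j _ => ?_
    push_cast
    ring_nf
  have hlast : a τ = ‖x ((k : ℤ) + 1) - x k‖ ^ 2 := by simp only [a, sub_add_cancel]
  rw [hshift, ← hlast, alphaT, mul_assoc, ← mul_sub, ← mul_sub,
    Finset.sum_range_succ_mul_sub_shift]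

lemma Finset.mul_sum_mul_le_sum_sq_add (s : Finset ℕ) (b : ℕ → ℝ) {L : ℝ} (hL : 0 ≤ L) (D : ℝ) :
    L * (∑ t ∈ s, b t) * D ≤ L / 2 * ∑ t ∈ s, b t ^ 2 + L / 2 * s.card * D ^ 2 := by
  have hterm : ∀ t ∈ s, L * b t * D ≤ L / 2 * b t ^ 2 + L / 2 * D ^ 2 := fun t _ => by
    nlinarith [mul_nonneg hL (sq_nonneg (b t - D))]
  calc L * (∑ t ∈ s, b t) * D = ∑ t ∈ s, L * b t * D := by rw [Finset.mul_sum, Finset.sum_mul]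
    _ ≤ ∑ t ∈ s, (L / 2 * b t ^ 2 + L / 2 * D ^ 2) := Finset.sum_le_sum hterm
    _ = _ := by rw [Finset.sum_add_distrib, Finset.sum_const, nsmul_eq_mul, Finset.mul_sum]; ring

section CoordLipschitz

variable {f' : PiLp 2 H → PiLp 2 H} {L : ℝ}
  (hf' : ∀ (z : PiLp 2 H) (i : Fin m) (u u' : H i), ‖f' (upd z i u) - f' (upd z i u')‖ ≤ L * ‖u - u'‖)
include hf'

omit [∀ i, InnerProductSpace ℝ (H i)] in
lemma norm_sub_le_of_eq_off {z z' : PiLp 2 H} {i : Fin m} (hzz' : ∀ j ≠ i, z j = z' j) :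
    ‖f' z - f' z'‖ ≤ L * ‖z i - z' i‖ := by
  have hz : z = upd z' i (z i) := by
    ext j
    by_cases hj : j = i
    · subst hj; simp [upd]
    · simp [upd, Function.update_of_ne hj, hzz' j hj]
  have hz' : z' = upd z' i (z' i) := by simp [upd]
  have hlip := hf' z' i (z i) (z' i)
  rwa [← hz, ← hz'] at hlip

variable {x : ℤ → PiLp 2 H} {idx : ℕ → Fin m}
  (hx : ∀ (n : ℕ) (j : Fin m), j ≠ idx n → x ((n : ℤ) + 1) j = x n j)
include hx

omit [∀ i, InnerProductSpace ℝ (H i)] in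
/-- For `h < 0` there is no update `idx h`, but since `s ≥ 0` the two read points coincide. -/
lemma norm_sub_readIter_max_succ_le (hL : 0 ≤ L) {s : Fin m → ℤ} (hs : ∀ j, 0 ≤ s j) (h : ℤ) :
    ‖f' (readIter x fun j => max (s j) (h + 1)) - f' (readIter x fun j => max (s j) h)‖
      ≤ L * ‖x (h + 1) - x h‖ := by
  rcases lt_or_ge h 0 with hneg | hnonneg
  · have hsame : (fun j => max (s j) (h + 1)) = fun j => max (s j) h := by
      funext j
      rw [max_eq_left (by linarith [hs j]), max_eq_left (by linarith [hs j])]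
    rw [hsame, sub_self, norm_zero]
    positivity
  lift h to ℕ using hnonneg with n
  refine (norm_sub_le_of_eq_off hf' (i := idx n) fun j hj => ?_).trans ?_
  · change x (max (s j) (n + 1)) j = x (max (s j) n) j
    rcases le_or_gt (s j) n with hle | hgt
    · rw [max_eq_right hle, max_eq_right (by omega), hx n j hj]
    · rw [max_eq_left (by omega), max_eq_left hgt.le]
  · gcongr
    change ‖x (max (s (idx n)) (n + 1)) (idx n) - x (max (s (idx n)) n) (idx n)‖ ≤ _
    rcases le_or_gt (s (idx n)) n with hle | hgt
    · rw [max_eq_right hle, max_eq_right (by omega)]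
      exact PiLp.norm_apply_le (x (n + 1) - x n) (idx n)
    · rw [max_eq_left (by omega), max_eq_left hgt.le, sub_self, norm_zero]
      positivity

omit [∀ i, InnerProductSpace ℝ (H i)] in
lemma norm_sub_xhatD_le (hL : 0 ≤ L) {τ : ℕ} {d : ℕ → Fin m → ℕ}
    (hd : ∀ (k : ℕ) (j : Fin m), d k j ≤ min k τ) (k : ℕ) :
    ‖f' (x k) - f' (xhatD x d k)‖
      ≤ L * ∑ t ∈ Finset.range τ, ‖x ((k : ℤ) - τ + t + 1) - x ((k : ℤ) - τ + t)‖ := by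
  set s : Fin m → ℤ := fun j => k - d k j
  have hs_nonneg : ∀ j, 0 ≤ s j := fun j => by
    have := (hd k j).trans (min_le_left _ _)
    simp only [s]
    omega
  have hs_ge : ∀ j, (k : ℤ) - τ ≤ s j := fun j => by
    have := (hd k j).trans (min_le_right _ _)
    simp only [s]
    omega
  have hs_le : ∀ j, s j ≤ k := fun j => by
    simp only [s]
    omega
  let y : ℕ → PiLp 2 H := fun t => f' (readIter x fun j => max (s j) ((k : ℤ) - τ + t))
  have hy0 : y 0 = f' (xhatD x d k) := by
    simp only [y, Nat.cast_zero, add_zero, max_eq_left (hs_ge _)]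
    rfl
  have hyτ : y τ = f' (x k) := by
    simp only [y, sub_add_cancel, max_eq_right (hs_le _)]
    rfl
  have hstep : ∀ {t}, t < τ → dist (y t) (y (t + 1))
      ≤ L * ‖x ((k : ℤ) - τ + t + 1) - x ((k : ℤ) - τ + t)‖ := fun {t} _ => by
    rw [dist_comm, dist_eq_norm]
    simp only [y, Nat.cast_succ, ← add_assoc]
    exact norm_sub_readIter_max_succ_le hf' hx hL hs_nonneg ((k : ℤ) - τ + t)
  rw [← hy0, ← hyτ, ← dist_eq_norm, dist_comm, Finset.mul_sum]
  exact dist_le_range_sum_of_dist_le τ hstep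

end CoordLipschitz

theorem stmt15_general
    (τ : ℕ) (d : ℕ → Fin m → ℕ) (hd : ∀ (k : ℕ) (j : Fin m), d k j ≤ min k τ)
    (idx : ℕ → Fin m)
    (x : ℤ → PiLp 2 H)
    (hx_agree : ∀ (k : ℕ) (j : Fin m), j ≠ idx k → x ((k : ℤ) + 1) j = x (k : ℤ) j)
    (f' : PiLp 2 H → PiLp 2 H)
    (Lres : ℝ) (hLres_pos : 0 < Lres)
    (hf_lip_res : ∀ (z : PiLp 2 H) (i : Fin m) (u u' : H i),
      ‖f' (upd z i u) - f' (upd z i u')‖ ≤ Lres * ‖u - u'‖)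
 :
    ∀ k : ℕ,
      ⟪f' (x (k : ℤ)) - f' (xhatD x d k), x ((k : ℤ) + 1) - x (k : ℤ)⟫ ≤
        τ * Lres * ‖x ((k : ℤ) + 1) - x (k : ℤ)‖ ^ 2
          + alphaT (Lres / 2) τ x k - alphaT (Lres / 2) τ x (k + 1) := by
  intro k
  set Δ := x ((k : ℤ) + 1) - x k
  set b : ℕ → ℝ := fun t => ‖x ((k : ℤ) - τ + t + 1) - x ((k : ℤ) - τ + t)‖
  have hgrad := norm_sub_xhatD_le hf_lip_res hx_agree hLres_pos.le hd k
  calc ⟪f' (x k) - f' (xhatD x d k), Δ⟫ ≤ ‖f' (x k) - f' (xhatD x d k)‖ * ‖Δ‖ :=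
        real_inner_le_norm _ _
    _ ≤ Lres * (∑ t ∈ Finset.range τ, b t) * ‖Δ‖ := by gcongr
    _ ≤ Lres / 2 * ∑ t ∈ Finset.range τ, b t ^ 2 + Lres / 2 * τ * ‖Δ‖ ^ 2 := by
        simpa only [Finset.card_range] using
          Finset.mul_sum_mul_le_sum_sq_add (Finset.range τ) b hLres_pos.le ‖Δ‖
    _ = _ := by
        rw [add_sub_assoc, alphaT_sub_alphaT_succ]
        ring

/-- Lemma: deterministic delayed-gradient bound with `α̃`. -/
theorem stmt15
    [∀ i, CompleteSpace (H i)]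
    (hm : 0 < m)
    (τ : ℕ) (d : ℕ → Fin m → ℕ) (hd : ∀ (k : ℕ) (j : Fin m), d k j ≤ min k τ)
    (idx : ℕ → Fin m)
    (x : ℤ → PiLp 2 H) (x0 : PiLp 2 H)
    (hx_init : ∀ n : ℤ, n ≤ 0 → x n = x0)
    (hx_agree : ∀ (k : ℕ) (j : Fin m), j ≠ idx k → x ((k : ℤ) + 1) j = x (k : ℤ) j)
    (f : PiLp 2 H → ℝ) (f' : PiLp 2 H → PiLp 2 H)
    (hf_grad : ∀ z : PiLp 2 H, HasGradientAt f (f' z) z)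
    (Lres : ℝ) (hLres_pos : 0 < Lres)
    (hf_lip_res : ∀ (z : PiLp 2 H) (i : Fin m) (u u' : H i),
      ‖f' (upd z i u) - f' (upd z i u')‖ ≤ Lres * ‖u - u'‖)
 :
    ∀ k : ℕ,
      ⟪f' (x (k : ℤ)) - f' (xhatD x d k), x ((k : ℤ) + 1) - x (k : ℤ)⟫ ≤
        τ * Lres * ‖x ((k : ℤ) + 1) - x (k : ℤ)‖ ^ 2
          + alphaT (Lres / 2) τ x k - alphaT (Lres / 2) τ x (k + 1) :=
  stmt15_general τ d hd idx x hx_agree f' Lres hLres_pos hf_lip_res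
end
end
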